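/- For every n ≥ 0, the number T_{2n+2} of directed paths of length 2n+2 in the partition-move digraph from the empty partition back to the empty partition satisfies T_{2n+2} ≥ 1·3·5···(2n+1), the product of the first n+1 odd numbers. -/

import Mathlib

/-- Adding one cell to the Young diagram of a partition, given as the multiset of its parts:
either append a new part equal to `1`, or increase one part by `1`. -/
def AddCell (s t : Multiset ℕ) : Prop :=
  t = 1 ::ₘ s ∨ ∃ h ∈ s, t = (h + 1) ::ₘ s.erase h

/-- The X-move on partitions: replace two parts `h₁, h₂ ≥ 2` by the single part
`h₁ + h₂ − 1`. -/
def XMove (s t : Multiset ℕ) : Prop :=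
  ∃ h₁ h₂, h₁ ∈ s ∧ h₂ ∈ s.erase h₁ ∧ 2 ≤ h₁ ∧ 2 ≤ h₂ ∧
    t = (h₁ + h₂ - 1) ::ₘ (s.erase h₁).erase h₂

/-- A move (directed edge) in the partition digraph: a U-move (add one cell), a D-move
(remove one cell, the inverse of a U-move) or an X-move, between partitions, i.e. multisets
of positive parts. -/
def PMove (s t : Multiset ℕ) : Prop :=
  0 ∉ s ∧ 0 ∉ t ∧ (AddCell s t ∨ AddCell t s ∨ XMove s t)

/-- `T L`: the number of directed paths of length `L` in the partition-move digraph from the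
empty partition back to the empty partition. -/
noncomputable def T (L : ℕ) : ℕ :=
  Nat.card {p : Fin (L + 1) → Multiset ℕ //
    p 0 = 0 ∧ p (Fin.last L) = 0 ∧ ∀ i : Fin L, PMove (p i.castSucc) (p i.succ)}


namespace TP
open Multiset

def inc (s : Multiset ℕ) (a : ℕ) : Multiset ℕ := (a+1) ::ₘ s.erase a
def dec (s : Multiset ℕ) (b : ℕ) : Multiset ℕ :=
  if b = 1 then s.erase 1 else (b-1) ::ₘ s.erase b

def up (s : Multiset ℕ) : Finset (Multiset ℕ) := (insert 0 s.toFinset).image (inc s)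
def down (s : Multiset ℕ) : Finset (Multiset ℕ) := s.toFinset.image (dec s)

/- count lemmas -/
lemma count_inc_succ (s : Multiset ℕ) (a : ℕ) :
    (inc s a).count (a+1) = s.count (a+1) + 1 := by
  simp [inc, count_cons, count_erase_of_ne (by omega : a+1 ≠ a)]

lemma count_inc_at (s : Multiset ℕ) (a : ℕ) :
    (inc s a).count a = s.count a - 1 := by
  simp [inc, count_cons, count_erase_self, (by omega : ¬ a = a + 1)]

lemma count_inc_ne (s : Multiset ℕ) {a k : ℕ} (h1 : k ≠ a) (h2 : k ≠ a+1) :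
    (inc s a).count k = s.count k := by
  simp [inc, count_cons, count_erase_of_ne h1, h2]

lemma count_dec_self (s : Multiset ℕ) (b : ℕ) (hb : b ≠ 0) :
    (dec s b).count b = s.count b - 1 := by
  rcases eq_or_ne b 1 with rfl | h
  · simp [dec, count_erase_self]
  · rw [dec, if_neg h, count_cons, if_neg (show ¬ b = b - 1 by omega), count_erase_self]
    omega

lemma count_dec_pred (s : Multiset ℕ) (b : ℕ) (hb : 2 ≤ b) :
    (dec s b).count (b-1) = s.count (b-1) + 1 := by
  rw [dec, if_neg (by omega : ¬ b = 1)]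
  simp [count_cons, count_erase_of_ne (by omega : b-1 ≠ b)]

lemma count_dec_ne (s : Multiset ℕ) {b k : ℕ} (h1 : k ≠ b) (h2 : k ≠ b-1) :
    (dec s b).count k = s.count k := by
  rcases eq_or_ne b 1 with rfl | h
  · simp [dec, count_erase_of_ne h1]
  · rw [dec, if_neg h]
    simp [count_cons, count_erase_of_ne h1, h2]

lemma inc_dec (s : Multiset ℕ) (a : ℕ) (hs : (0:ℕ) ∉ s) (ha : a ∈ insert 0 s.toFinset) :
    dec (inc s a) (a+1) = s := by
  rcases Finset.mem_insert.1 ha with rfl | ha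
  · simp [inc, dec, Multiset.erase_of_notMem hs]
  · have ha' : a ∈ s := Multiset.mem_toFinset.1 ha
    have hane : a ≠ 0 := fun h => hs (h ▸ ha')
    have : a + 1 ≠ 1 := by omega
    simp only [dec, this, if_false, inc]
    rw [Multiset.erase_cons_head]
    simp only [Nat.add_sub_cancel]
    exact Multiset.cons_erase ha'

lemma dec_inc (s : Multiset ℕ) (b : ℕ) (hs : (0:ℕ) ∉ s) (hb : b ∈ s) :
    inc (dec s b) (b-1) = s := by
  have hbne : b ≠ 0 := fun h => hs (h ▸ hb)
  rcases eq_or_ne b 1 with rfl | h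
  · have : (0:ℕ) ∉ s.erase 1 := fun h => hs (Multiset.mem_of_mem_erase h)
    simp [dec, inc, Multiset.erase_of_notMem this, Multiset.cons_erase hb]
  · have h2 : 2 ≤ b := by omega
    simp only [dec, h, if_false, inc]
    rw [Multiset.erase_cons_head, (by omega : b - 1 + 1 = b)]
    exact Multiset.cons_erase hb

/- membership and positivity -/

lemma pos_of_up {s t : Multiset ℕ} (hs : (0:ℕ) ∉ s) (h : t ∈ up s) : (0:ℕ) ∉ t := by
  obtain ⟨a, _, rfl⟩ := Finset.mem_image.1 h
  intro h0
  rcases Multiset.mem_cons.1 h0 with h' | h'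
  · omega
  · exact hs (Multiset.mem_of_mem_erase h')

lemma pos_of_down {s t : Multiset ℕ} (hs : (0:ℕ) ∉ s) (h : t ∈ down s) : (0:ℕ) ∉ t := by
  obtain ⟨b, hb, rfl⟩ := Finset.mem_image.1 h
  have hb' : b ∈ s := Multiset.mem_toFinset.1 hb
  have hbne : b ≠ 0 := fun h => hs (h ▸ hb')
  intro h0
  rcases eq_or_ne b 1 with rfl | h1
  · rw [dec, if_pos rfl] at h0
    exact hs (Multiset.mem_of_mem_erase h0)
  · rw [dec, if_neg h1] at h0
    rcases Multiset.mem_cons.1 h0 with h' | h'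
    · omega
    · exact hs (Multiset.mem_of_mem_erase h')

lemma mem_up_iff {s t : Multiset ℕ} (hs : (0:ℕ) ∉ s) : t ∈ up s ↔ AddCell s t := by
  constructor
  · intro h
    obtain ⟨a, ha, rfl⟩ := Finset.mem_image.1 h
    rcases Finset.mem_insert.1 ha with rfl | ha
    · left; simp [inc, Multiset.erase_of_notMem hs]
    · right; exact ⟨a, Multiset.mem_toFinset.1 ha, rfl⟩
  · rintro (rfl | ⟨h, hh, rfl⟩)
    · exact Finset.mem_image.2 ⟨0, Finset.mem_insert_self _ _,
        by simp [inc, Multiset.erase_of_notMem hs]⟩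
    · exact Finset.mem_image.2 ⟨h, Finset.mem_insert_of_mem (Multiset.mem_toFinset.2 hh), rfl⟩

lemma mem_down_iff {s t : Multiset ℕ} (hs : (0:ℕ) ∉ s) :
    t ∈ down s ↔ (AddCell t s ∧ (0:ℕ) ∉ t) := by
  constructor
  · intro h
    refine ⟨?_, pos_of_down hs h⟩
    obtain ⟨b, hb, rfl⟩ := Finset.mem_image.1 h
    have hb' : b ∈ s := Multiset.mem_toFinset.1 hb
    have hbne : b ≠ 0 := fun h => hs (h ▸ hb')
    rcases eq_or_ne b 1 with rfl | h1
    · left; rw [dec, if_pos rfl, Multiset.cons_erase hb']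
    · right
      refine ⟨b - 1, ?_, ?_⟩
      · rw [dec, if_neg h1]; exact Multiset.mem_cons_self _ _
      · rw [dec, if_neg h1, Multiset.erase_cons_head, (by omega : b - 1 + 1 = b),
          Multiset.cons_erase hb']
  · rintro ⟨(h | ⟨h, hh, heq⟩), ht⟩
    · subst h
      refine Finset.mem_image.2 ⟨1, Multiset.mem_toFinset.2 (Multiset.mem_cons_self _ _), ?_⟩
      rw [dec, if_pos rfl, Multiset.erase_cons_head]
    · have hhne : h ≠ 0 := fun h0 => ht (h0 ▸ hh)
      have hmem : h + 1 ∈ s := heq ▸ Multiset.mem_cons_self _ _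
      refine Finset.mem_image.2 ⟨h + 1, Multiset.mem_toFinset.2 hmem, ?_⟩
      rw [dec, if_neg (by omega), heq, Multiset.erase_cons_head, Nat.add_sub_cancel,
        Multiset.cons_erase hh]

lemma adj_symm {s t : Multiset ℕ} (hs : (0:ℕ) ∉ s) (ht : (0:ℕ) ∉ t) :
    t ∈ up s ↔ s ∈ down t := by
  constructor
  · intro h
    obtain ⟨a, ha, rfl⟩ := Finset.mem_image.1 h
    have hmem : a + 1 ∈ inc s a := Multiset.mem_cons_self _ _
    exact Finset.mem_image.2 ⟨a + 1, Multiset.mem_toFinset.2 hmem, inc_dec s a hs ha⟩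
  · intro h
    obtain ⟨b, hb, rfl⟩ := Finset.mem_image.1 h
    have hb' : b ∈ t := Multiset.mem_toFinset.1 hb
    have hbne : b ≠ 0 := fun h => ht (h ▸ hb')
    refine Finset.mem_image.2 ⟨b - 1, ?_, dec_inc t b ht hb'⟩
    rcases eq_or_ne b 1 with rfl | h1
    · simp
    · refine Finset.mem_insert_of_mem (Multiset.mem_toFinset.2 ?_)
      rw [dec, if_neg h1]
      exact Multiset.mem_cons_self _ _

/- injectivity and cards -/

lemma inc_injOn (s : Multiset ℕ) {a a' : ℕ}
    (ha : a ∈ insert 0 s.toFinset) (ha' : a' ∈ insert 0 s.toFinset)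
    (h : inc s a = inc s a') : a = a' := by
  by_contra hne
  have h1 : (inc s a).count (a+1) = s.count (a+1) + 1 := count_inc_succ s a
  have h2 : (inc s a').count (a+1) ≤ s.count (a+1) := by
    rcases eq_or_ne (a+1) (a'+1) with he | he
    · omega
    · rcases eq_or_ne (a+1) a' with he2 | he2
      · rw [he2, count_inc_at s a']; omega
      · rw [count_inc_ne s he2 he]
  rw [h] at h1
  omega

lemma dec_injOn (s : Multiset ℕ) (hs : (0:ℕ) ∉ s) {b b' : ℕ}
    (hb : b ∈ s) (hb' : b' ∈ s)
    (h : dec s b = dec s b') : b = b' := by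
  by_contra hne
  have hbne : b ≠ 0 := fun h0 => hs (h0 ▸ hb)
  have hbne' : b' ≠ 0 := fun h0 => hs (h0 ▸ hb')
  have hc : 1 ≤ s.count b := Multiset.one_le_count_iff_mem.2 hb
  have h1 : (dec s b).count b = s.count b - 1 := count_dec_self s b hbne
  have h2 : s.count b ≤ (dec s b').count b := by
    rcases eq_or_ne b (b'-1) with he | he
    · have : 2 ≤ b' := by omega
      rw [he, count_dec_pred s b' this]; omega
    · rw [count_dec_ne s hne he]
  rw [h] at h1
  omega

lemma card_up (s : Multiset ℕ) (hs : (0:ℕ) ∉ s) : (up s).card = s.toFinset.card + 1 := by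
  rw [up, Finset.card_image_of_injOn (fun a ha a' ha' => inc_injOn s ha ha'),
    Finset.card_insert_of_notMem (by simp [hs])]

lemma card_down (s : Multiset ℕ) (hs : (0:ℕ) ∉ s) : (down s).card = s.toFinset.card := by
  rw [down, Finset.card_image_of_injOn
    (fun b hb b' hb' => dec_injOn s hs (Multiset.mem_toFinset.1 hb) (Multiset.mem_toFinset.1 hb'))]

/- additive count identities (no truncated subtraction) -/

lemma count_zero {s : Multiset ℕ} (hs : (0:ℕ) ∉ s) : s.count 0 = 0 :=
  Multiset.count_eq_zero_of_notMem hs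

lemma count_inc' {s : Multiset ℕ} {a : ℕ} (hs : (0:ℕ) ∉ s) (ha : a ∈ insert 0 s.toFinset)
    {k : ℕ} (hk : k ≠ 0) :
    (inc s a).count k + (if k = a then 1 else 0) = s.count k + (if k = a + 1 then 1 else 0) := by
  rcases eq_or_ne k (a+1) with rfl | h1
  · rw [count_inc_succ, if_neg (by omega), if_pos rfl]
  · rcases eq_or_ne k a with rfl | h2
    · have hk' : k ∈ s := by
        rcases Finset.mem_insert.1 ha with h | h
        · omega
        · exact Multiset.mem_toFinset.1 h
      have : 1 ≤ s.count k := Multiset.one_le_count_iff_mem.2 hk'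
      rw [count_inc_at, if_pos rfl, if_neg h1]
      omega
    · rw [count_inc_ne s h2 h1, if_neg h2, if_neg h1]

lemma count_dec' {s : Multiset ℕ} {b : ℕ} (hs : (0:ℕ) ∉ s) (hb : b ∈ s)
    {k : ℕ} (hk : k ≠ 0) :
    (dec s b).count k + (if k = b then 1 else 0) = s.count k + (if k = b - 1 then 1 else 0) := by
  have hbne : b ≠ 0 := fun h => hs (h ▸ hb)
  rcases eq_or_ne k b with rfl | h1
  · have : 1 ≤ s.count k := Multiset.one_le_count_iff_mem.2 hb
    rw [count_dec_self s k hbne, if_pos rfl, if_neg (by omega)]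
    omega
  · rcases eq_or_ne k (b-1) with rfl | h2
    · have h2b : 2 ≤ b := by omega
      rw [count_dec_pred s b h2b, if_neg h1, if_pos rfl]
    · rw [count_dec_ne s h1 h2, if_neg h1, if_neg h2]

/- common cover structure -/

section Common
variable {s r : Multiset ℕ} {a b : ℕ}

lemma ne_of_common_up (hs : (0:ℕ) ∉ s) (hr : (0:ℕ) ∉ r)
    (ha : a ∈ insert 0 s.toFinset) (hb : b ∈ insert 0 r.toFinset)
    (hne : s ≠ r) (heq : inc s a = inc r b) : a ≠ b := by
  rintro rfl
  exact hne ((inc_dec s a hs ha).symm.trans (heq ▸ inc_dec r a hr hb))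

lemma succ_mem_of_common_up (hs : (0:ℕ) ∉ s) (hr : (0:ℕ) ∉ r)
    (ha : a ∈ insert 0 s.toFinset) (hb : b ∈ insert 0 r.toFinset)
    (hab : a ≠ b) (heq : inc s a = inc r b) : b + 1 ∈ s := by
  have e1 := count_inc' hs ha (k := b+1) (by omega)
  have e2 := count_inc' hr hb (k := b+1) (by omega)
  rw [heq] at e1
  rw [← Multiset.one_le_count_iff_mem]
  split_ifs at e1 e2 <;> omega

lemma sub_common_up (hs : (0:ℕ) ∉ s) (hr : (0:ℕ) ∉ r)
    (ha : a ∈ insert 0 s.toFinset) (hb : b ∈ insert 0 r.toFinset)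
    (hab : a ≠ b) (heq : inc s a = inc r b) : s + r - inc s a = dec s (b+1) := by
  have hbs : b + 1 ∈ s := succ_mem_of_common_up hs hr ha hb hab heq
  ext k
  rcases eq_or_ne k 0 with rfl | hk
  · have h1 : (inc s a).count 0 = 0 := by
      have : (0:ℕ) ∉ inc s a := pos_of_up hs
        (Finset.mem_image.2 ⟨a, ha, rfl⟩)
      exact count_zero this
    have h2 : (dec s (b+1)).count 0 = 0 := by
      have : dec s (b+1) ∈ down s := Finset.mem_image.2 ⟨b+1, Multiset.mem_toFinset.2 hbs, rfl⟩
      exact count_zero (pos_of_down hs this)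
    rw [Multiset.count_sub, Multiset.count_add, h1, h2, count_zero hs, count_zero hr]
  · have e1 := count_inc' hs ha (k := k) hk
    have e2 := count_inc' hr hb (k := k) hk
    have e3 := count_dec' hs hbs (k := k) hk
    rw [← heq] at e2
    rw [Multiset.count_sub, Multiset.count_add]
    have hb1 : b + 1 - 1 = b := by omega
    rw [hb1] at e3
    split_ifs at e1 e2 e3 <;> omega

lemma le_common_up (hs : (0:ℕ) ∉ s) (hr : (0:ℕ) ∉ r)
    (ha : a ∈ insert 0 s.toFinset) (hb : b ∈ insert 0 r.toFinset)
    (hab : a ≠ b) (heq : inc s a = inc r b) : inc s a ≤ s + r := by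
  have har : a + 1 ∈ r := succ_mem_of_common_up hr hs hb ha hab.symm heq.symm
  rw [Multiset.le_iff_count]
  intro k
  rcases eq_or_ne k 0 with rfl | hk
  · have : (0:ℕ) ∉ inc s a := pos_of_up hs (Finset.mem_image.2 ⟨a, ha, rfl⟩)
    rw [count_zero this]; omega
  · have e1 := count_inc' hs ha (k := k) hk
    have e2 := count_inc' hr hb (k := k) hk
    rw [← heq] at e2
    have hcr : 1 ≤ r.count (a+1) := Multiset.one_le_count_iff_mem.2 har
    rw [Multiset.count_add]
    rcases eq_or_ne k (a+1) with rfl | h1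
    · split_ifs at e1 e2 <;> omega
    · split_ifs at e1 e2 <;> omega

/- common cocover structure -/

lemma ne_of_common_down (hs : (0:ℕ) ∉ s) (hr : (0:ℕ) ∉ r) {x y : ℕ}
    (hx : x ∈ s) (hy : y ∈ r) (hne : s ≠ r) (heq : dec s x = dec r y) : x ≠ y := by
  rintro rfl
  exact hne ((dec_inc s x hs hx).symm.trans (heq ▸ dec_inc r x hr hy))

lemma pred_mem_of_common_down (hs : (0:ℕ) ∉ s) (hr : (0:ℕ) ∉ r) {x y : ℕ}
    (hx : x ∈ s) (hy : y ∈ r) (hxy : x ≠ y) (heq : dec s x = dec r y) :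
    y - 1 ∈ insert 0 s.toFinset := by
  rcases eq_or_ne y 1 with rfl | hy1
  · simp
  · have hyne : y ≠ 0 := fun h => hr (h ▸ hy)
    have hy2 : 2 ≤ y := by omega
    refine Finset.mem_insert_of_mem (Multiset.mem_toFinset.2 ?_)
    have e1 := count_dec' hs hx (k := y-1) (by omega)
    have e2 := count_dec' hr hy (k := y-1) (by omega)
    rw [heq] at e1
    have hxne : x ≠ 0 := fun h => hs (h ▸ hx)
    have hne2 : ¬ (y - 1 = x - 1) := by omega
    rw [← Multiset.one_le_count_iff_mem]
    split_ifs at e1 e2 <;> omega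

lemma sub_common_down (hs : (0:ℕ) ∉ s) (hr : (0:ℕ) ∉ r) {x y : ℕ}
    (hx : x ∈ s) (hy : y ∈ r) (hxy : x ≠ y) (heq : dec s x = dec r y) :
    s + r - dec s x = inc s (y-1) := by
  have hys : y - 1 ∈ insert 0 s.toFinset := pred_mem_of_common_down hs hr hx hy hxy heq
  have hyne : y ≠ 0 := fun h => hr (h ▸ hy)
  have hxne : x ≠ 0 := fun h => hs (h ▸ hx)
  ext k
  rcases eq_or_ne k 0 with rfl | hk
  · have h1 : (dec s x).count 0 = 0 :=
      count_zero (pos_of_down hs (Finset.mem_image.2 ⟨x, Multiset.mem_toFinset.2 hx, rfl⟩))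
    have h2 : (inc s (y-1)).count 0 = 0 :=
      count_zero (pos_of_up hs (Finset.mem_image.2 ⟨y-1, hys, rfl⟩))
    rw [Multiset.count_sub, Multiset.count_add, h1, h2, count_zero hs, count_zero hr]
  · have e1 := count_dec' hs hx (k := k) hk
    have e2 := count_dec' hr hy (k := k) hk
    have e3 := count_inc' hs hys (k := k) hk
    rw [← heq] at e2
    rw [Multiset.count_sub, Multiset.count_add]
    have hy1 : y - 1 + 1 = y := by omega
    rw [hy1] at e3
    have : ¬ (y - 1 = x - 1) ∨ x = 1 ∨ y = 1 := by omega
    split_ifs at e1 e2 e3 <;> omega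

lemma le_common_down (hs : (0:ℕ) ∉ s) (hr : (0:ℕ) ∉ r) {x y : ℕ}
    (hx : x ∈ s) (hy : y ∈ r) (hxy : x ≠ y) (heq : dec s x = dec r y) :
    dec s x ≤ s + r := by
  rw [Multiset.le_iff_count]
  intro k
  rcases eq_or_ne k 0 with rfl | hk
  · have h1 : (dec s x).count 0 = 0 :=
      count_zero (pos_of_down hs (Finset.mem_image.2 ⟨x, Multiset.mem_toFinset.2 hx, rfl⟩))
    rw [h1]; omega
  · have e1 := count_dec' hs hx (k := k) hk
    have e2 := count_dec' hr hy (k := k) hk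
    rw [← heq] at e2
    rw [Multiset.count_add]
    have hxne : x ≠ 0 := fun h => hs (h ▸ hx)
    have hyne : y ≠ 0 := fun h => hr (h ▸ hy)
    split_ifs at e1 e2 <;> omega

end Common

/- key counting identity -/

lemma key_count {s r : Multiset ℕ} (hs : (0:ℕ) ∉ s) (hr : (0:ℕ) ∉ r) :
    ((up s).filter (fun t => r ∈ down t)).card
      = ((down s).filter (fun u => r ∈ up u)).card + (if r = s then 1 else 0) := by
  rcases eq_or_ne r s with rfl | hne
  · rw [if_pos rfl]
    have h1 : (up r).filter (fun t => r ∈ down t) = up r := by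
      refine Finset.filter_true_of_mem (fun t ht => ?_)
      exact (adj_symm hr (pos_of_up hr ht)).1 ht
    have h2 : (down r).filter (fun u => r ∈ up u) = down r := by
      refine Finset.filter_true_of_mem (fun u hu => ?_)
      exact (adj_symm (pos_of_down hr hu) hr).2 hu
    rw [h1, h2, card_up r hr, card_down r hr]
  · rw [if_neg hne, Nat.add_zero]
    refine Finset.card_bij' (fun t _ => s + r - t) (fun u _ => s + r - u) ?_ ?_ ?_ ?_
    · intro t ht
      obtain ⟨htu, htd⟩ := Finset.mem_filter.1 ht
      have ht0 : (0:ℕ) ∉ t := pos_of_up hs htu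
      have htr : t ∈ up r := (adj_symm hr ht0).2 htd
      obtain ⟨a, ha, rfl⟩ := Finset.mem_image.1 htu
      obtain ⟨b, hb, heq⟩ := Finset.mem_image.1 htr
      have hab : a ≠ b := ne_of_common_up hs hr ha hb (fun h => hne h.symm) heq.symm
      have hbs : b + 1 ∈ s := succ_mem_of_common_up hs hr ha hb hab heq.symm
      have has : a + 1 ∈ r := succ_mem_of_common_up hr hs hb ha hab.symm heq
      have e1 : s + r - inc s a = dec s (b+1) := sub_common_up hs hr ha hb hab heq.symm
      have e2 : s + r - inc s a = dec r (a+1) := by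
        have := sub_common_up hr hs hb ha hab.symm heq
        rw [heq, add_comm r s] at this
        exact this
      refine Finset.mem_filter.2 ⟨?_, ?_⟩
      · show s + r - inc s a ∈ down s
        rw [e1]
        exact Finset.mem_image.2 ⟨b+1, Multiset.mem_toFinset.2 hbs, rfl⟩
      · show r ∈ up (s + r - inc s a)
        have hud : s + r - inc s a ∈ down r := by
          rw [e2]
          exact Finset.mem_image.2 ⟨a+1, Multiset.mem_toFinset.2 has, rfl⟩
        have hu0 : (0:ℕ) ∉ s + r - inc s a := pos_of_down hr hud
        exact (adj_symm hu0 hr).2 hud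
    · intro u hu
      obtain ⟨hud, huu⟩ := Finset.mem_filter.1 hu
      have hu0 : (0:ℕ) ∉ u := pos_of_down hs hud
      have hur : u ∈ down r := (adj_symm hu0 hr).1 huu
      obtain ⟨x, hx, rfl⟩ := Finset.mem_image.1 hud
      obtain ⟨y, hy, heq⟩ := Finset.mem_image.1 hur
      have hx' : x ∈ s := Multiset.mem_toFinset.1 hx
      have hy' : y ∈ r := Multiset.mem_toFinset.1 hy
      have hxy : x ≠ y := ne_of_common_down hs hr hx' hy' (fun h => hne h.symm) heq.symm
      have hys : y - 1 ∈ insert 0 s.toFinset :=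
        pred_mem_of_common_down hs hr hx' hy' hxy heq.symm
      have hxr : x - 1 ∈ insert 0 r.toFinset :=
        pred_mem_of_common_down hr hs hy' hx' hxy.symm heq
      have e1 : s + r - dec s x = inc s (y-1) := sub_common_down hs hr hx' hy' hxy heq.symm
      have e2 : s + r - dec s x = inc r (x-1) := by
        have := sub_common_down hr hs hy' hx' hxy.symm heq
        rw [heq, add_comm r s] at this
        exact this
      refine Finset.mem_filter.2 ⟨?_, ?_⟩
      · show s + r - dec s x ∈ up s
        rw [e1]
        exact Finset.mem_image.2 ⟨y-1, hys, rfl⟩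
      · show r ∈ down (s + r - dec s x)
        have hup : s + r - dec s x ∈ up r := by
          rw [e2]
          exact Finset.mem_image.2 ⟨x-1, hxr, rfl⟩
        have ht0 : (0:ℕ) ∉ s + r - dec s x := by
          rw [e1]
          exact pos_of_up hs (Finset.mem_image.2 ⟨y-1, hys, rfl⟩)
        exact (adj_symm hr ht0).1 hup
    · intro t ht
      obtain ⟨htu, htd⟩ := Finset.mem_filter.1 ht
      have ht0 : (0:ℕ) ∉ t := pos_of_up hs htu
      have htr : t ∈ up r := (adj_symm hr ht0).2 htd
      obtain ⟨a, ha, rfl⟩ := Finset.mem_image.1 htu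
      obtain ⟨b, hb, heq⟩ := Finset.mem_image.1 htr
      have hab : a ≠ b := ne_of_common_up hs hr ha hb (fun h => hne h.symm) heq.symm
      show s + r - (s + r - inc s a) = inc s a
      exact tsub_tsub_cancel_of_le (le_common_up hs hr ha hb hab heq.symm)
    · intro u hu
      obtain ⟨hud, huu⟩ := Finset.mem_filter.1 hu
      have hu0 : (0:ℕ) ∉ u := pos_of_down hs hud
      have hur : u ∈ down r := (adj_symm hu0 hr).1 huu
      obtain ⟨x, hx, rfl⟩ := Finset.mem_image.1 hud
      obtain ⟨y, hy, heq⟩ := Finset.mem_image.1 hur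
      have hx' : x ∈ s := Multiset.mem_toFinset.1 hx
      have hy' : y ∈ r := Multiset.mem_toFinset.1 hy
      have hxy : x ≠ y := ne_of_common_down hs hr hx' hy' (fun h => hne h.symm) heq.symm
      show s + r - (s + r - dec s x) = dec s x
      exact tsub_tsub_cancel_of_le (le_common_down hs hr hx' hy' hxy heq.symm)

/- rewriting double sums over a common superset -/

lemma sum_over_superset {A U : Finset (Multiset ℕ)} {B : Multiset ℕ → Finset (Multiset ℕ)}
    (h : ∀ t ∈ A, B t ⊆ U) (v : Multiset ℕ → ℕ) :
    ∑ t ∈ A, ∑ x ∈ B t, v x = ∑ x ∈ U, ((A.filter (fun t => x ∈ B t)).card) * v x := by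
  have step : ∀ t ∈ A, ∑ x ∈ B t, v x = ∑ x ∈ U, if x ∈ B t then v x else 0 := by
    intro t ht
    rw [← Finset.sum_filter]
    congr 1
    ext x
    simp only [Finset.mem_filter]
    exact ⟨fun hx => ⟨h t ht hx, hx⟩, fun hx => hx.2⟩
  rw [Finset.sum_congr rfl step, Finset.sum_comm]
  refine Finset.sum_congr rfl (fun x _ => ?_)
  rw [← Finset.sum_filter, Finset.sum_const, smul_eq_mul]

/- the exchange identity: DU = UD + I -/

lemma exchange {s : Multiset ℕ} (hs : (0:ℕ) ∉ s) (v : Multiset ℕ → ℕ) :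
    ∑ t ∈ up s, ∑ x ∈ down t, v x = v s + ∑ u ∈ down s, ∑ x ∈ up u, v x := by
  classical
  set U : Finset (Multiset ℕ) :=
    ((up s).biUnion down ∪ (down s).biUnion up) ∪ {s} with hU
  have hsub1 : ∀ t ∈ up s, down t ⊆ U := fun t ht x hx =>
    Finset.mem_union.2 (Or.inl (Finset.mem_union.2 (Or.inl
      (Finset.mem_biUnion.2 ⟨t, ht, hx⟩))))
  have hsub2 : ∀ u ∈ down s, up u ⊆ U := fun u hu x hx =>
    Finset.mem_union.2 (Or.inl (Finset.mem_union.2 (Or.inr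
      (Finset.mem_biUnion.2 ⟨u, hu, hx⟩))))
  have hsU : s ∈ U := Finset.mem_union.2 (Or.inr (Finset.mem_singleton_self s))
  have hposU : ∀ x ∈ U, (0:ℕ) ∉ x := by
    intro x hx
    rcases Finset.mem_union.1 hx with hx | hx
    · rcases Finset.mem_union.1 hx with hx | hx
      · obtain ⟨t, ht, hxt⟩ := Finset.mem_biUnion.1 hx
        exact pos_of_down (pos_of_up hs ht) hxt
      · obtain ⟨u, hu, hxu⟩ := Finset.mem_biUnion.1 hx
        exact pos_of_up (pos_of_down hs hu) hxu
    · rw [Finset.mem_singleton.1 hx]; exact hs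
  rw [sum_over_superset hsub1 v, sum_over_superset hsub2 v]
  have : ∀ x ∈ U, ((up s).filter (fun t => x ∈ down t)).card * v x
      = ((down s).filter (fun u => x ∈ up u)).card * v x + (if x = s then v x else 0) := by
    intro x hx
    rw [key_count hs (hposU x hx)]
    rcases eq_or_ne x s with rfl | hne
    · rw [if_pos rfl, if_pos rfl]; ring
    · rw [if_neg hne, if_neg hne]; ring
  rw [Finset.sum_congr rfl this, Finset.sum_add_distrib, Finset.sum_ite_eq' U s v, if_pos hsU]
  ring

/- UD moves, neighbours -/

def UDMove (s t : Multiset ℕ) : Prop :=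
  0 ∉ s ∧ 0 ∉ t ∧ (AddCell s t ∨ AddCell t s)

lemma UDMove_PMove {s t : Multiset ℕ} (h : UDMove s t) : PMove s t :=
  ⟨h.1, h.2.1, h.2.2.elim Or.inl (fun h' => Or.inr (Or.inl h'))⟩

def nbr (s : Multiset ℕ) : Finset (Multiset ℕ) := up s ∪ down s

lemma udmove_iff {s t : Multiset ℕ} (hs : (0:ℕ) ∉ s) : UDMove t s ↔ t ∈ nbr s := by
  constructor
  · rintro ⟨ht, -, (h | h)⟩
    · exact Finset.mem_union.2 (Or.inr ((mem_down_iff hs).2 ⟨h, ht⟩))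
    · exact Finset.mem_union.2 (Or.inl ((mem_up_iff hs).2 h))
  · intro h
    rcases Finset.mem_union.1 h with h | h
    · exact ⟨pos_of_up hs h, hs, Or.inr ((mem_up_iff hs).1 h)⟩
    · exact ⟨pos_of_down hs h, hs, Or.inl (((mem_down_iff hs).1 h).1)⟩

lemma sum_up {s t : Multiset ℕ} (hs : (0:ℕ) ∉ s) (h : t ∈ up s) : t.sum = s.sum + 1 := by
  obtain ⟨a, ha, rfl⟩ := Finset.mem_image.1 h
  rcases Finset.mem_insert.1 ha with rfl | ha
  · rw [inc, Multiset.erase_of_notMem hs, Multiset.sum_cons]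
    omega
  · have ha' : a ∈ s := Multiset.mem_toFinset.1 ha
    have := Multiset.sum_erase ha'
    rw [inc, Multiset.sum_cons]
    omega

lemma sum_down {s t : Multiset ℕ} (hs : (0:ℕ) ∉ s) (h : t ∈ down s) : t.sum + 1 = s.sum := by
  obtain ⟨b, hb, rfl⟩ := Finset.mem_image.1 h
  have hb' : b ∈ s := Multiset.mem_toFinset.1 hb
  have hbne : b ≠ 0 := fun h0 => hs (h0 ▸ hb')
  have := Multiset.sum_erase hb'
  rcases eq_or_ne b 1 with rfl | h1
  · rw [dec, if_pos rfl]; omega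
  · rw [dec, if_neg h1, Multiset.sum_cons]; omega

lemma disj_up_down (s : Multiset ℕ) (hs : (0:ℕ) ∉ s) : Disjoint (up s) (down s) := by
  rw [Finset.disjoint_left]
  intro t h1 h2
  have := sum_up hs h1
  have := sum_down hs h2
  omega

lemma sum_nbr (s : Multiset ℕ) (hs : (0:ℕ) ∉ s) (f : Multiset ℕ → ℕ) :
    ∑ t ∈ nbr s, f t = ∑ t ∈ up s, f t + ∑ t ∈ down s, f t := by
  rw [nbr, Finset.sum_union (disj_up_down s hs)]

/- finiteness -/

lemma card_le_sum_of_pos {s : Multiset ℕ} (hs : (0:ℕ) ∉ s) : Multiset.card s ≤ s.sum := by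
  induction s using Multiset.induction with
  | empty => simp
  | cons a s ih =>
    have ha : a ≠ 0 := fun h => hs (h ▸ Multiset.mem_cons_self a s)
    have := ih (fun h => hs (Multiset.mem_cons_of_mem h))
    rw [Multiset.card_cons, Multiset.sum_cons]
    omega

def bound (L : ℕ) : Finset (Multiset ℕ) := (Multiset.powerset (L • Multiset.range (L+1))).toFinset

lemma mem_bound {L : ℕ} {s : Multiset ℕ} (h1 : s.sum ≤ L) (h2 : (0:ℕ) ∉ s) :
    s ∈ bound L := by
  rw [bound, Multiset.mem_toFinset, Multiset.mem_powerset, Multiset.le_iff_count]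
  intro k
  rw [Multiset.count_nsmul]
  rcases eq_or_ne k 0 with rfl | hk
  · rw [count_zero h2]; omega
  · rcases le_or_gt k L with hkL | hkL
    · have hc : (Multiset.range (L+1)).count k = 1 :=
        Multiset.count_eq_one_of_mem (Multiset.nodup_range (L+1)) (by
          rw [Multiset.mem_range]; omega)
      have := Multiset.count_le_card k s
      have := card_le_sum_of_pos h2
      rw [hc]
      omega
    · have : k ∉ s := by
        intro hmem
        have := Multiset.single_le_sum (fun y _ => Nat.zero_le y) k hmem
        omega
      rw [Multiset.count_eq_zero_of_notMem this]
      omega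

lemma walk_mem_bound {L : ℕ} {R : Multiset ℕ → Multiset ℕ → Prop}
    (hR : ∀ s t, R s t → PMove s t)
    (p : Fin (L+1) → Multiset ℕ) (h0 : p 0 = 0)
    (hm : ∀ i : Fin L, R (p i.castSucc) (p i.succ)) :
    ∀ i, p i ∈ bound L := by
  have key : ∀ k (hk : k < L + 1), (p ⟨k, hk⟩).sum ≤ k ∧ (0:ℕ) ∉ p ⟨k, hk⟩ := by
    intro k
    induction k with
    | zero =>
      intro hk
      have : (⟨0, hk⟩ : Fin (L+1)) = 0 := rfl
      rw [this, h0]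
      simp
    | succ k ih =>
      intro hk
      have hkL : k < L := Nat.succ_lt_succ_iff.mp hk
      have hk' : k < L + 1 := Nat.lt_of_succ_lt hk
      have hmv := hR _ _ (hm ⟨k, hkL⟩)
      rw [Fin.castSucc_mk, Fin.succ_mk] at hmv
      obtain ⟨hs1, hs2⟩ := ih hk'
      obtain ⟨-, ht, hmoves⟩ := hmv
      refine ⟨?_, ht⟩
      have hsum : (p ⟨k+1, hk⟩).sum ≤ (p ⟨k, hk'⟩).sum + 1 := by
        rcases hmoves with h | h | h
        · rcases h with heq | ⟨a, ha, heq⟩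
          · rw [heq, Multiset.sum_cons]; omega
          · have := Multiset.sum_erase ha
            rw [heq, Multiset.sum_cons]; omega
        · rcases h with heq | ⟨a, ha, heq⟩
          · rw [heq, Multiset.sum_cons]; omega
          · have := Multiset.sum_erase ha
            rw [heq, Multiset.sum_cons]; omega
        · obtain ⟨h1, h2, hm1, hm2, hh1, hh2, heq⟩ := h
          have e1 := Multiset.sum_erase hm1
          have e2 := Multiset.sum_erase hm2
          rw [heq, Multiset.sum_cons]
          omega
      omega
  intro i
  have hi : (⟨i.1, i.2⟩ : Fin (L+1)) = i := rfl
  obtain ⟨hsum, hpos⟩ := key i.1 i.2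
  rw [hi] at hsum hpos
  exact mem_bound (le_trans hsum (by omega)) hpos

lemma finite_aux {L : ℕ} {P : (Fin (L+1) → Multiset ℕ) → Prop}
    (h : ∀ p, P p → ∀ i, p i ∈ bound L) : Finite {p // P p} := by
  have : Function.Injective
      (fun (p : {p // P p}) (i : Fin (L+1)) => (⟨p.1 i, h p.1 p.2 i⟩ : {x // x ∈ bound L})) := by
    intro p q hpq
    exact Subtype.ext (funext fun i => congrArg Subtype.val (congrFun hpq i))
  exact Finite.of_injective _ this

/- walks and their counts -/

def Walk (L : ℕ) (s : Multiset ℕ) :=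
  {p : Fin (L + 1) → Multiset ℕ //
    p 0 = 0 ∧ p (Fin.last L) = s ∧ ∀ i : Fin L, UDMove (p i.castSucc) (p i.succ)}

instance (L : ℕ) (s : Multiset ℕ) : Finite (Walk L s) :=
  finite_aux (fun p hp => walk_mem_bound (fun _ _ h => UDMove_PMove h) p hp.1 hp.2.2)

noncomputable def N (L : ℕ) (s : Multiset ℕ) : ℕ := Nat.card (Walk L s)

lemma N_zero (s : Multiset ℕ) : N 0 s = if s = 0 then 1 else 0 := by
  rcases eq_or_ne s 0 with rfl | h
  · rw [if_pos rfl]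
    have : Unique (Walk 0 0) :=
      { default := ⟨fun _ => 0, rfl, rfl, fun i => i.elim0⟩
        uniq := fun p => by
          apply Subtype.ext
          funext i
          have hi : i = 0 := Fin.ext (by omega)
          rw [hi]
          exact p.2.1 }
    exact Nat.card_unique
  · rw [if_neg h]
    have : IsEmpty (Walk 0 s) := ⟨fun p => h (p.2.2.1.symm.trans p.2.1)⟩
    exact Nat.card_of_isEmpty

def walkF (L : ℕ) (s : Multiset ℕ) (hs : (0:ℕ) ∉ s) (p : Walk (L+1) s) :
    Σ t : {x // x ∈ nbr s}, Walk L t.1 :=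
  ⟨⟨p.1 (Fin.last L).castSucc, by
      have h := p.2.2.2 (Fin.last L)
      rw [Fin.succ_last, p.2.2.1] at h
      exact (udmove_iff hs).1 h⟩,
    ⟨fun i => p.1 i.castSucc, by
      show p.1 (Fin.castSucc 0) = 0
      rw [Fin.castSucc_zero]; exact p.2.1, rfl, fun i => by
      have h := p.2.2.2 i.castSucc
      rwa [Fin.succ_castSucc] at h⟩⟩

def walkG (L : ℕ) (s : Multiset ℕ) (hs : (0:ℕ) ∉ s)
    (x : Σ t : {x // x ∈ nbr s}, Walk L t.1) : Walk (L+1) s :=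
  ⟨Fin.snoc x.2.1 s, by
      have h0 : (0 : Fin (L+2)) = (0 : Fin (L+1)).castSucc := (Fin.castSucc_zero).symm
      rw [h0, Fin.snoc_castSucc]
      exact x.2.2.1, Fin.snoc_last _ _, fun i => by
      induction i using Fin.lastCases with
      | last =>
        rw [Fin.succ_last, Fin.snoc_last, Fin.snoc_castSucc, x.2.2.2.1]
        exact (udmove_iff hs).2 x.1.2
      | cast j =>
        rw [Fin.succ_castSucc, Fin.snoc_castSucc, Fin.snoc_castSucc]
        exact x.2.2.2.2 j⟩

lemma walkF_inj (L : ℕ) (s : Multiset ℕ) (hs : (0:ℕ) ∉ s) :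
    Function.Injective (walkF L s hs) := by
  intro p q h
  have h2' : (fun i : Fin (L+1) => p.1 i.castSucc) = (fun i : Fin (L+1) => q.1 i.castSucc) :=
    congrArg (fun x : (Σ t : {x // x ∈ nbr s}, Walk L t.1) =>
      (x.2.1 : Fin (L+1) → Multiset ℕ)) h
  apply Subtype.ext
  funext i
  induction i using Fin.lastCases with
  | last => rw [p.2.2.1, q.2.2.1]
  | cast j => exact congrFun h2' j

lemma walkG_inj (L : ℕ) (s : Multiset ℕ) (hs : (0:ℕ) ∉ s) :
    Function.Injective (walkG L s hs) := by
  intro x y h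
  obtain ⟨⟨t, ht⟩, q, hq0, hql, hqm⟩ := x
  obtain ⟨⟨t', ht'⟩, q', hq0', hql', hqm'⟩ := y
  have hfun : (Fin.snoc q s : Fin (L+2) → Multiset ℕ) = Fin.snoc q' s :=
    congrArg Subtype.val h
  have hq : q = q' := by
    funext i
    have := congrFun hfun i.castSucc
    rwa [Fin.snoc_castSucc, Fin.snoc_castSucc] at this
  have htt : t = t' := by
    rw [show t = q (Fin.last L) from hql.symm, show t' = q' (Fin.last L) from hql'.symm, hq]
  subst htt
  subst hq
  rfl

lemma N_succ (L : ℕ) (s : Multiset ℕ) (hs : (0:ℕ) ∉ s) :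
    N (L+1) s = ∑ t ∈ nbr s, N L t := by
  classical
  letI : ∀ t : {x // x ∈ nbr s}, Fintype (Walk L t.1) := fun t => Fintype.ofFinite _
  have hcard : N (L+1) s = Nat.card (Σ t : {x // x ∈ nbr s}, Walk L t.1) := by
    refine le_antisymm ?_ ?_
    · exact Nat.card_le_card_of_injective _ (walkF_inj L s hs)
    · exact Nat.card_le_card_of_injective _ (walkG_inj L s hs)
  calc N (L+1) s = Nat.card (Σ t : {x // x ∈ nbr s}, Walk L t.1) := hcard
    _ = ∑ t ∈ (nbr s).attach, N L t.1 := by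
        rw [Nat.card_eq_fintype_card, Fintype.card_sigma, Finset.univ_eq_attach]
        exact Finset.sum_congr rfl fun t _ => (Nat.card_eq_fintype_card).symm
    _ = ∑ t ∈ nbr s, N L t := Finset.sum_attach _ _

lemma up_ne_zero {s t : Multiset ℕ} (hs : (0:ℕ) ∉ s) (h : t ∈ up s) : t ≠ 0 := by
  have := sum_up hs h
  intro h0
  rw [h0] at this
  simp at this

lemma Dsum : ∀ L : ℕ, ∀ s : Multiset ℕ, (0:ℕ) ∉ s →
    ∑ t ∈ up s, N L t = L * N (L-1) s := by
  intro L
  induction L with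
  | zero =>
    intro s hs
    have h : ∀ t ∈ up s, N 0 t = 0 := fun t ht => by
      rw [N_zero, if_neg (up_ne_zero hs ht)]
    rw [Finset.sum_congr rfl h]
    simp
  | succ L ih =>
    intro s hs
    have step : ∀ t ∈ up s, N (L+1) t = ∑ x ∈ up t, N L x + ∑ x ∈ down t, N L x :=
      fun t ht => by rw [N_succ L t (pos_of_up hs ht), sum_nbr t (pos_of_up hs ht)]
    rw [Finset.sum_congr rfl step, Finset.sum_add_distrib]
    have e1 : ∑ t ∈ up s, ∑ x ∈ up t, N L x = L * ∑ t ∈ up s, N (L-1) t := by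
      rw [Finset.mul_sum]
      exact Finset.sum_congr rfl fun t ht => ih t (pos_of_up hs ht)
    have e2 : ∑ t ∈ up s, ∑ x ∈ down t, N L x
        = N L s + ∑ u ∈ down s, ∑ x ∈ up u, N L x := exchange hs (N L)
    have e3 : ∑ u ∈ down s, ∑ x ∈ up u, N L x = L * ∑ u ∈ down s, N (L-1) u := by
      rw [Finset.mul_sum]
      exact Finset.sum_congr rfl fun u hu => ih u (pos_of_down hs hu)
    rw [e1, e2, e3]
    rcases Nat.eq_zero_or_pos L with rfl | hL
    · simp
    · obtain ⟨M, rfl⟩ : ∃ M, L = M + 1 := ⟨L-1, by omega⟩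
      have hNL : N (M+1) s = ∑ t ∈ up s, N M t + ∑ t ∈ down s, N M t := by
        rw [N_succ M s hs, sum_nbr s hs]
      have h1 : M + 1 - 1 = M := by omega
      rw [h1, Nat.add_sub_cancel, hNL]
      ring

lemma nbr_zero : nbr (0 : Multiset ℕ) = {(1 : ℕ) ::ₘ 0} := by
  rw [nbr, up, down]
  ext t
  simp [inc, Multiset.erase_zero]

lemma one_pos' : (0:ℕ) ∉ ((1:ℕ) ::ₘ 0 : Multiset ℕ) := by simp

lemma down_one : down ((1:ℕ) ::ₘ 0) = {(0 : Multiset ℕ)} := by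
  rw [down]
  ext t
  simp [dec]

lemma N_succ_zero (L : ℕ) : N (L+1) 0 = N L ((1:ℕ) ::ₘ 0) := by
  rw [N_succ L 0 (by simp), nbr_zero, Finset.sum_singleton]

lemma N_succ_one (L : ℕ) :
    N (L+1) ((1:ℕ) ::ₘ 0) = N L 0 + L * N (L-1) ((1:ℕ) ::ₘ 0) := by
  rw [N_succ L _ one_pos', sum_nbr _ one_pos', Dsum L _ one_pos', down_one,
    Finset.sum_singleton]
  ring

lemma main_rec (L : ℕ) : N (L+2) 0 = (L+1) * N L 0 := by
  have h : N (L+2) 0 = N (L+1) ((1:ℕ) ::ₘ 0) := N_succ_zero (L+1)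
  rw [h, N_succ_one L]
  rcases Nat.eq_zero_or_pos L with rfl | hL
  · simp
  · obtain ⟨M, rfl⟩ : ∃ M, L = M + 1 := ⟨L-1, by omega⟩
    have h2 : M + 1 - 1 = M := by omega
    rw [h2, ← N_succ_zero M]
    ring

lemma N_prod (n : ℕ) : N (2*n+2) 0 = ∏ i ∈ Finset.range (n+1), (2*i+1) := by
  induction n with
  | zero =>
    have : 2*0+2 = 0+2 := by ring
    rw [this, main_rec 0, N_zero]
    simp
  | succ n ih =>
    have h : 2*(n+1)+2 = (2*n+2)+2 := by ring
    rw [h, main_rec (2*n+2), ih, Finset.prod_range_succ (fun i => 2*i+1) (n+1)]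
    ring

end TP


/-- Lower bound: the number of closed directed paths of length `2n+2` at the empty partition
in the partition-move digraph is at least `1·3·5···(2n+1)`. -/
theorem T_lower_bound (n : ℕ) :
    ∏ i ∈ Finset.range (n + 1), (2 * i + 1) ≤ T (2 * n + 2) := by
  rw [← TP.N_prod n]
  have hfin : Finite {p : Fin (2*n+2 + 1) → Multiset ℕ //
      p 0 = 0 ∧ p (Fin.last (2*n+2)) = 0 ∧ ∀ i : Fin (2*n+2), PMove (p i.castSucc) (p i.succ)} :=
    TP.finite_aux (fun p hp => TP.walk_mem_bound (fun _ _ h => h) p hp.1 hp.2.2)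
  have hinj : Function.Injective
      (fun (p : TP.Walk (2*n+2) 0) =>
        (⟨p.1, p.2.1, p.2.2.1, fun i => TP.UDMove_PMove (p.2.2.2 i)⟩ :
          {p : Fin (2*n+2 + 1) → Multiset ℕ //
            p 0 = 0 ∧ p (Fin.last (2*n+2)) = 0 ∧
            ∀ i : Fin (2*n+2), PMove (p i.castSucc) (p i.succ)})) := by
    intro p q h
    have h' := congrArg Subtype.val h
    exact Subtype.ext h'
  exact Nat.card_le_card_of_injective _ hinj
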